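/- Suppose (U^n) solves the implicit upwind scheme. Assume that for every n ∈ ℕ the sequence j ↦ |U^n_{j+1} − U^n_j| is summable over ℤ, and that for every n ∈ ℕ the sequences j ↦ |f⁺(U^n_{j+1}) − f⁺(U^n_j)| and j ↦ |f⁻(U^n_{j+1}) − f⁻(U^n_j)| are summable over ℤ. Then the implicit upwind scheme is unconditionally total-variation diminishing: for every n ∈ ℕ, TV[U^n] = Σ_{j∈ℤ} |U^n_{j+1} − U^n_j| ≤ Σ_{j∈ℤ} |U^0_{j+1} − U^0_j| = TV[U^0], with no CFL condition on τ and h. -/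

import Mathlib

open scoped BigOperators

/-- The L1 coefficients `c^{n+1}_k` for the discrete Caputo derivative:
`c^{n+1}_0 = (n+1)^{1-α} - n^{1-α}` and, for `1 ≤ k ≤ n`,
`c^{n+1}_k = 2(n+1-k)^{1-α} - (n+2-k)^{1-α} - (n-k)^{1-α}`. -/
noncomputable def caputoCoeff (α : ℝ) (n k : ℕ) : ℝ :=
  if k = 0 then ((n : ℝ) + 1) ^ (1 - α) - (n : ℝ) ^ (1 - α)
  else 2 * ((n : ℝ) + 1 - (k : ℝ)) ^ (1 - α) - ((n : ℝ) + 2 - (k : ℝ)) ^ (1 - α)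
    - ((n : ℝ) - (k : ℝ)) ^ (1 - α)

/-- `U` solves the implicit upwind scheme with time steps indexed by `ℕ`
and space indexed by `ℤ`. -/
def SolvesImplicitScheme (α δ : ℝ) (fp fm : ℝ → ℝ) (U : ℕ → ℤ → ℝ) : Prop :=
  ∀ (n : ℕ) (j : ℤ),
    U (n + 1) j = (∑ k ∈ Finset.range (n + 1), caputoCoeff α n k * U k j)
      - δ * (fp (U (n + 1) j) - fp (U (n + 1) (j - 1)))
      - δ * (fm (U (n + 1) (j + 1)) - fm (U (n + 1) j))

/-!
Writing `W_j = ∑ₖ c^{n+1}_k U^k_j` for the history term, one step of the scheme reads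
`V_j + δ (f⁺(V_j) - f⁺(V_{j-1})) + δ (f⁻(V_{j+1}) - f⁻(V_j)) = W_j` for `V = U^{n+1}`.
Differencing in `j`, the increments of `V`, `δ f⁺(V)` and `-δ f⁻(V)` all have the sign of
`V_{j+1} - V_j`, so their absolute values add up; summing over `j` the flux terms cancel against
their shifts, and `TV[V] ≤ TV[W]`. The L1 weights `c^{n+1}_k` are nonnegative (concavity of
`x ↦ x^{1-α}`) and sum to one, so `TV[W] ≤ maxₖ TV[U^k]`, and induction on `n` gives the bound.
-/

open Finset

lemma rpow_add_two_add_rpow_le {p : ℝ} (hp₀ : 0 ≤ p) (hp₁ : p ≤ 1) {x : ℝ} (hx : 0 ≤ x) :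
    (x + 2) ^ p + x ^ p ≤ 2 * (x + 1) ^ p := by
  have h := (Real.concaveOn_rpow hp₀ hp₁).2 (Set.mem_Ici.2 hx)
    (Set.mem_Ici.2 (by linarith : 0 ≤ x + 2)) (by norm_num : (0 : ℝ) ≤ 1 / 2)
    (by norm_num : (0 : ℝ) ≤ 1 / 2) (by norm_num)
  simp only [smul_eq_mul] at h
  rw [show 1 / 2 * x + 1 / 2 * (x + 2) = x + 1 by ring] at h
  linarith

lemma caputoCoeff_nonneg {α : ℝ} (hα₀ : 0 ≤ α) (hα₁ : α ≤ 1) {n k : ℕ} (hk : k ≤ n) :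
    0 ≤ caputoCoeff α n k := by
  unfold caputoCoeff
  split_ifs with hk₀
  · have := Real.rpow_le_rpow (Nat.cast_nonneg n) (le_add_of_nonneg_right zero_le_one)
      (sub_nonneg.2 hα₁)
    linarith
  · have hx : (0 : ℝ) ≤ n - k := sub_nonneg.2 (by exact_mod_cast hk)
    have := rpow_add_two_add_rpow_le (sub_nonneg.2 hα₁) (by linarith) hx
    rw [show (n : ℝ) - k + 2 = n + 2 - k by ring, show (n : ℝ) - k + 1 = n + 1 - k by ring] at this
    linarith

lemma caputoCoeff_succ_add_two (α : ℝ) (n k : ℕ) :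
    caputoCoeff α (n + 1) (k + 2) = caputoCoeff α n (k + 1) := by
  simp only [caputoCoeff, Nat.add_eq_zero_iff, OfNat.ofNat_ne_zero, one_ne_zero, and_false,
    if_false]
  push_cast
  ring_nf

lemma caputoCoeff_succ_one_add_succ_zero (α : ℝ) (n : ℕ) :
    caputoCoeff α (n + 1) 1 + caputoCoeff α (n + 1) 0 = caputoCoeff α n 0 := by
  simp only [caputoCoeff, one_ne_zero, if_false, if_true]
  push_cast
  ring_nf

lemma sum_caputoCoeff {α : ℝ} (hα : α ≠ 1) (n : ℕ) :
    ∑ k ∈ range (n + 1), caputoCoeff α n k = 1 := by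
  induction n with
  | zero =>
    simp only [caputoCoeff, zero_add, range_one, sum_singleton, if_true, Nat.cast_zero,
      Real.one_rpow, Real.zero_rpow (sub_ne_zero.2 hα.symm), sub_zero]
  | succ n ih =>
    rw [sum_range_succ', sum_range_succ', add_assoc, caputoCoeff_succ_one_add_succ_zero]
    simpa only [caputoCoeff_succ_add_two, ← sum_range_succ'] using ih

/-- `TV[u]`, with junk value `0` when the series diverges. -/
noncomputable def totalVariation (u : ℤ → ℝ) : ℝ :=
  ∑' j : ℤ, |u (j + 1) - u j|

lemma totalVariation_finset_sum_le {ι : Type*} (s : Finset ι) {c : ι → ℝ}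
    (hc : ∀ i ∈ s, 0 ≤ c i) {u : ι → ℤ → ℝ}
    (hu : ∀ i ∈ s, Summable fun j : ℤ => |u i (j + 1) - u i j|) :
    Summable (fun j : ℤ => |(∑ i ∈ s, c i * u i (j + 1)) - ∑ i ∈ s, c i * u i j|) ∧
      totalVariation (fun j => ∑ i ∈ s, c i * u i j) ≤ ∑ i ∈ s, c i * totalVariation (u i) := by
  have hle : ∀ j : ℤ, |(∑ i ∈ s, c i * u i (j + 1)) - ∑ i ∈ s, c i * u i j|
      ≤ ∑ i ∈ s, c i * |u i (j + 1) - u i j| := fun j => by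
    rw [← sum_sub_distrib]
    refine (abs_sum_le_sum_abs _ _).trans_eq (sum_congr rfl fun i hi => ?_)
    rw [← mul_sub, abs_mul, abs_of_nonneg (hc i hi)]
  have hsum : Summable fun j : ℤ => ∑ i ∈ s, c i * |u i (j + 1) - u i j| :=
    summable_sum fun i hi => (hu i hi).mul_left _
  have hsummable := hsum.of_nonneg_of_le (fun _ => abs_nonneg _) hle
  refine ⟨hsummable, (hsummable.tsum_le_tsum hle hsum).trans_eq ?_⟩
  rw [Summable.tsum_finsetSum fun i hi => (hu i hi).mul_left _]
  exact sum_congr rfl fun i _ => tsum_mul_left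

lemma tsum_le_tsum_of_le_add_shift {a b p m : ℤ → ℝ} (ha : Summable a) (hb : Summable b)
    (hp : Summable p) (hm : Summable m) (h : ∀ j, a j + p j + m j ≤ b j + p (j - 1) + m (j + 1)) :
    ∑' j, a j ≤ ∑' j, b j := by
  have hp' : Summable fun j => p (j - 1) := (Equiv.subRight (1 : ℤ)).summable_iff.2 hp
  have hm' : Summable fun j => m (j + 1) := (Equiv.addRight (1 : ℤ)).summable_iff.2 hm
  have key := Summable.tsum_le_tsum h ((ha.add hp).add hm) ((hb.add hp').add hm')
  have hp_shift : ∑' j, p (j - 1) = ∑' j, p j := (Equiv.subRight (1 : ℤ)).tsum_eq p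
  have hm_shift : ∑' j, m (j + 1) = ∑' j, m j := (Equiv.addRight (1 : ℤ)).tsum_eq m
  rw [Summable.tsum_add (ha.add hp) hm, Summable.tsum_add ha hp, Summable.tsum_add (hb.add hp') hm',
    Summable.tsum_add hb hp', hp_shift, hm_shift] at key
  linarith

lemma abs_sub_add_mul_abs_flux_eq {fp fm : ℝ → ℝ} (hfp : Monotone fp) (hfm : Antitone fm)
    {δ : ℝ} (hδ : 0 ≤ δ) (a b : ℝ) :
    |b - a| + δ * |fp b - fp a| + δ * |fm b - fm a|
      = |b - a + δ * (fp b - fp a) - δ * (fm b - fm a)| := by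
  rcases le_total a b with hab | hab
  · have hP := sub_nonneg.2 (hfp hab)
    have hM := sub_nonpos.2 (hfm hab)
    rw [abs_of_nonneg (sub_nonneg.2 hab), abs_of_nonneg hP, abs_of_nonpos hM,
      abs_of_nonneg (by nlinarith)]
    ring
  · have hP := sub_nonpos.2 (hfp hab)
    have hM := sub_nonneg.2 (hfm hab)
    rw [abs_of_nonpos (sub_nonpos.2 hab), abs_of_nonpos hP, abs_of_nonneg hM,
      abs_of_nonpos (by nlinarith)]
    ring

theorem totalVariation_le_of_implicit_upwind_step {fp fm : ℝ → ℝ} (hfp : Monotone fp)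
    (hfm : Antitone fm) {δ : ℝ} (hδ : 0 ≤ δ) {V W : ℤ → ℝ}
    (hV : ∀ j, V j = W j - δ * (fp (V j) - fp (V (j - 1))) - δ * (fm (V (j + 1)) - fm (V j)))
    (hVs : Summable fun j : ℤ => |V (j + 1) - V j|)
    (hWs : Summable fun j : ℤ => |W (j + 1) - W j|)
    (hPs : Summable fun j : ℤ => |fp (V (j + 1)) - fp (V j)|)
    (hMs : Summable fun j : ℤ => |fm (V (j + 1)) - fm (V j)|) :
    totalVariation V ≤ totalVariation W := by
  refine tsum_le_tsum_of_le_add_shift hVs hWs (hPs.mul_left δ) (hMs.mul_left δ) fun j => ?_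
  have hnext := hV (j + 1)
  rw [add_sub_cancel_right] at hnext
  rw [sub_add_cancel]
  calc |V (j + 1) - V j| + δ * |fp (V (j + 1)) - fp (V j)| + δ * |fm (V (j + 1)) - fm (V j)|
      = |V (j + 1) - V j + δ * (fp (V (j + 1)) - fp (V j)) - δ * (fm (V (j + 1)) - fm (V j))| :=
        abs_sub_add_mul_abs_flux_eq hfp hfm hδ _ _
    _ = |(W (j + 1) - W j) + δ * (fp (V j) - fp (V (j - 1)))
          - δ * (fm (V (j + 1 + 1)) - fm (V (j + 1)))| := by
        congr 1; linarith [hV j]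
    _ ≤ |W (j + 1) - W j| + δ * |fp (V j) - fp (V (j - 1))|
          + δ * |fm (V (j + 1 + 1)) - fm (V (j + 1))| := by
        rw [← abs_of_nonneg hδ, ← abs_mul, ← abs_mul, abs_of_nonneg hδ]
        exact (abs_sub _ _).trans (add_le_add_left (abs_add_le _ _) _)

lemma le_apply_zero_of_le_weighted_sum {x : ℕ → ℝ} {c : ℕ → ℕ → ℝ}
    (hc : ∀ n k, k ≤ n → 0 ≤ c n k) (hc_sum : ∀ n, ∑ k ∈ range (n + 1), c n k = 1)
    (hx : ∀ n, x (n + 1) ≤ ∑ k ∈ range (n + 1), c n k * x k) (n : ℕ) : x n ≤ x 0 := by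
  induction n using Nat.strong_induction_on with
  | _ n ih =>
    cases n with
    | zero => exact le_rfl
    | succ n =>
      calc x (n + 1) ≤ ∑ k ∈ range (n + 1), c n k * x k := hx n
        _ ≤ ∑ k ∈ range (n + 1), c n k * x 0 := sum_le_sum fun k hk =>
          mul_le_mul_of_nonneg_left (ih k (mem_range.1 hk))
            (hc n k (Nat.lt_succ_iff.1 (mem_range.1 hk)))
        _ = x 0 := by rw [← sum_mul, hc_sum, one_mul]

/-- the implicit upwind scheme is unconditionally TVD:
`TV[U^n] ≤ TV[U^0]` for all `n`, with no CFL condition on `τ` and `h`. -/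
theorem implicit_upwind_tvd (α τ h : ℝ) (hα : α ∈ Set.Ioo (0 : ℝ) 1)
    (hτ : 0 < τ) (hh : 0 < h) (δ : ℝ) (hδ : δ = τ ^ α / (h * Real.Gamma (2 - α)))
    (fp fm : ℝ → ℝ) (hfp : Differentiable ℝ fp) (hfm : Differentiable ℝ fm)
    (hfp' : ∀ x, 0 ≤ deriv fp x) (hfm' : ∀ x, deriv fm x ≤ 0)
    (U : ℕ → ℤ → ℝ) (hU : SolvesImplicitScheme α δ fp fm U)
    (hsum : ∀ n : ℕ, Summable (fun j : ℤ => |U n (j + 1) - U n j|))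
    (hfpsum : ∀ n : ℕ, Summable (fun j : ℤ => |fp (U n (j + 1)) - fp (U n j)|))
    (hfmsum : ∀ n : ℕ, Summable (fun j : ℤ => |fm (U n (j + 1)) - fm (U n j)|)) :
    ∀ n : ℕ, ∑' j : ℤ, |U n (j + 1) - U n j| ≤ ∑' j : ℤ, |U 0 (j + 1) - U 0 j| := by
  have hδ₀ : 0 ≤ δ := by
    have := Real.Gamma_pos_of_pos (by linarith [hα.2] : 0 < 2 - α)
    rw [hδ]; positivity
  have hc : ∀ n k, k ≤ n → 0 ≤ caputoCoeff α n k := fun n k hk =>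
    caputoCoeff_nonneg hα.1.le hα.2.le hk
  refine le_apply_zero_of_le_weighted_sum hc (sum_caputoCoeff hα.2.ne) fun n => ?_
  obtain ⟨hWs, hW⟩ := totalVariation_finset_sum_le (range (n + 1))
    (fun k hk => hc n k (Nat.lt_succ_iff.1 (mem_range.1 hk))) fun k _ => hsum k
  exact (totalVariation_le_of_implicit_upwind_step (monotone_of_deriv_nonneg hfp hfp')
    (antitone_of_deriv_nonpos hfm hfm') hδ₀ (hU n) (hsum _) hWs (hfpsum _) (hfmsum _)).trans hW
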